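/- In the modified AKV model, every rank-one projection |w⟩⟨w| with w a unit vector in the interaction-free subspace W_D is a stationary state: ℒ_*(|w⟩⟨w|) = 0. More generally, every state whose range is contained in W_D satisfies ℒ_*(ρ) = 0. -/

import Mathlib

noncomputable section

open ContinuousLinearMap Finset
open scoped InnerProductSpace

/-- The Hilbert space ℂ^(N+M+1) of the modified AKV model. -/
abbrev AKVSpace (N M : ℕ) := EuclideanSpace ℂ (Fin (N + M + 1))

namespace AKV

variable (N M : ℕ)

/-- standard basis vector -/
def ket (i : Fin (N + M + 1)) : AKVSpace N M := EuclideanSpace.single i 1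

/-- rank-one operator |u⟩⟨v| : x ↦ ⟪v, x⟫ • u -/
def ketbra (u v : AKVSpace N M) : AKVSpace N M →L[ℂ] AKVSpace N M :=
  (innerSL ℂ v).smulRight u

/-- indices 2,…,N of the second level -/
def idx2 : Finset (Fin (N + M + 1)) := univ.filter fun i => 2 ≤ (i : ℕ) ∧ (i : ℕ) ≤ N
/-- indices N+1,…,N+M of the third level -/
def idx3 : Finset (Fin (N + M + 1)) := univ.filter fun i => N + 1 ≤ (i : ℕ)

/-- orthogonal projection onto span{e_0} -/
def P0 : AKVSpace N M →L[ℂ] AKVSpace N M := ketbra N M (ket N M 0) (ket N M 0)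
/-- orthogonal projection onto span{e_1} -/
def P1 : AKVSpace N M →L[ℂ] AKVSpace N M := ketbra N M (ket N M 1) (ket N M 1)
/-- orthogonal projection onto span{e_2,…,e_N} -/
def P2 : AKVSpace N M →L[ℂ] AKVSpace N M := ∑ i ∈ idx2 N M, ketbra N M (ket N M i) (ket N M i)
/-- orthogonal projection onto span{e_{N+1},…,e_{N+M}} -/
def P3 : AKVSpace N M →L[ℂ] AKVSpace N M := ∑ i ∈ idx3 N M, ketbra N M (ket N M i) (ket N M i)

/-- ψ = e_2 + ⋯ + e_N -/
def psi : AKVSpace N M := ∑ i ∈ idx2 N M, ket N M i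
/-- ψ' = e_{N+1} + ⋯ + e_{N+M} -/
def psi' : AKVSpace N M := ∑ i ∈ idx3 N M, ket N M i

/-- |Z| = Z⋆Z -/
def absZ (Z : AKVSpace N M →L[ℂ] AKVSpace N M) : AKVSpace N M →L[ℂ] AKVSpace N M :=
  adjoint Z * Z

/-- hypotheses on the interference operator Z of the modified AKV model -/
def IsAKVZ (hM : 1 ≤ M) (Z : AKVSpace N M →L[ℂ] AKVSpace N M) : Prop :=
  Z = P3 N M * Z * P2 N M ∧
  Z * adjoint Z = P3 N M ∧
  Z (ket N M ⟨N - 1, by omega⟩) = ((Real.sqrt ((N : ℝ) - 1))⁻¹ : ℂ) • psi' N M ∧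
  adjoint Z (ket N M ⟨N + 1, by omega⟩) = ((Real.sqrt ((N : ℝ) - 1))⁻¹ : ℂ) • psi N M

/-- the five Kraus operators -/
def kraus (Γ1m Γ1p Γ2m Γ2p Γ3m : ℝ) (Z : AKVSpace N M →L[ℂ] AKVSpace N M) :
    Fin 5 → AKVSpace N M →L[ℂ] AKVSpace N M :=
  ![((Real.sqrt (2 * Γ1m) : ℝ) : ℂ) • ketbra N M (psi N M) (ket N M 1),
    ((Real.sqrt (2 * ((N : ℝ) - 1) * Γ2m) : ℝ) : ℂ) • Z,
    ((Real.sqrt (2 * Γ3m) : ℝ) : ℂ) • ketbra N M (ket N M 0) (psi' N M),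
    ((Real.sqrt (2 * Γ1p) : ℝ) : ℂ) • ketbra N M (ket N M 1) (psi N M),
    ((Real.sqrt (2 * ((N : ℝ) - 1) * Γ2p) : ℝ) : ℂ) • adjoint Z]

/-- the effective Hamiltonian -/
def Heff (γ1m γ1p γ2m γ2p γ3m : ℝ) (Z : AKVSpace N M →L[ℂ] AKVSpace N M) :
    AKVSpace N M →L[ℂ] AKVSpace N M :=
  (γ1p : ℂ) • ketbra N M (psi N M) (psi N M)
    - (((N : ℂ) - 1) * (γ1m : ℂ)) • ketbra N M (ket N M 1) (ket N M 1)
    + (((N : ℂ) - 1) * (γ2p : ℂ)) • P3 N M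
    - (((N : ℂ) - 1) * (γ2m : ℂ)) • absZ N M Z
    - (γ3m : ℂ) • ketbra N M (psi' N M) (psi' N M)

/-- the predual GKSL generator ℒ_* of the modified AKV model -/
def Lstar (Γ1m Γ1p Γ2m Γ2p Γ3m γ1m γ1p γ2m γ2p γ3m : ℝ)
    (Z ρ : AKVSpace N M →L[ℂ] AKVSpace N M) : AKVSpace N M →L[ℂ] AKVSpace N M :=
  -Complex.I • (Heff N M γ1m γ1p γ2m γ2p γ3m Z * ρ - ρ * Heff N M γ1m γ1p γ2m γ2p γ3m Z)
    + ∑ k : Fin 5,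
        (kraus N M Γ1m Γ1p Γ2m Γ2p Γ3m Z k * ρ * adjoint (kraus N M Γ1m Γ1p Γ2m Γ2p Γ3m Z k)
          - (1 / 2 : ℂ) • (adjoint (kraus N M Γ1m Γ1p Γ2m Γ2p Γ3m Z k) *
                kraus N M Γ1m Γ1p Γ2m Γ2p Γ3m Z k * ρ
              + ρ * (adjoint (kraus N M Γ1m Γ1p Γ2m Γ2p Γ3m Z k) *
                kraus N M Γ1m Γ1p Γ2m Γ2p Γ3m Z k)))

/-- a state: positive semidefinite with trace one -/
def IsState (ρ : AKVSpace N M →L[ℂ] AKVSpace N M) : Prop :=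
  ρ.IsPositive ∧ LinearMap.trace ℂ (AKVSpace N M) ↑ρ = 1

/-- the interaction-free subspace W_D -/
def WD (Z : AKVSpace N M →L[ℂ] AKVSpace N M) : Submodule ℂ (AKVSpace N M) :=
  (Submodule.span ℂ {ket N M 1, psi N M, psi' N M})ᗮ ⊓
    LinearMap.ker (Z : AKVSpace N M →ₗ[ℂ] AKVSpace N M) ⊓ LinearMap.ker (adjoint Z : AKVSpace N M →ₗ[ℂ] AKVSpace N M)

/-- the subspace V = {e_0, e_1, ψ, ψ', Zψ, Z⋆ψ'}^⊥ -/
def Vsub (Z : AKVSpace N M →L[ℂ] AKVSpace N M) : Submodule ℂ (AKVSpace N M) :=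
  (Submodule.span ℂ
    {ket N M 0, ket N M 1, psi N M, psi' N M, Z (psi N M), adjoint Z (psi' N M)})ᗮ

/-- Im|Z| ∩ {ψ, Z⋆ψ'}^⊥ -/
def subA (Z : AKVSpace N M →L[ℂ] AKVSpace N M) : Submodule ℂ (AKVSpace N M) :=
  LinearMap.range (absZ N M Z : AKVSpace N M →ₗ[ℂ] AKVSpace N M) ⊓ (Submodule.span ℂ {psi N M, adjoint Z (psi' N M)})ᗮ

/-- ran P₃ ∩ {ψ', Zψ}^⊥ -/
def subB (Z : AKVSpace N M →L[ℂ] AKVSpace N M) : Submodule ℂ (AKVSpace N M) :=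
  LinearMap.range (P3 N M : AKVSpace N M →ₗ[ℂ] AKVSpace N M) ⊓ (Submodule.span ℂ {psi' N M, Z (psi N M)})ᗮ

/-- the orthogonal projection onto a subspace, as an operator on the whole space -/
def projOp (U : Submodule ℂ (AKVSpace N M)) : AKVSpace N M →L[ℂ] AKVSpace N M :=
  U.subtypeL ∘L U.orthogonalProjectionOnto

end AKV

/-!
Every operator entering the generator, `H_eff` and the five `L_k`, vanishes on `W_D` (the term
`P_3 = Z Z*` of `H_eff` because `Z*` does), so for a self-adjoint `ρ` with range in `W_D` we get
`X ρ = 0` and hence `ρ X* = (X ρ)* = 0`. As `H_eff` is self-adjoint, every term of `ℒ_*(ρ)` is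
of one of these two shapes.
-/

section StarRing

variable {R : Type*} [Ring R] [StarRing R]

lemma mul_star_eq_zero_of_mul_eq_zero {A ρ : R} (hρ : IsSelfAdjoint ρ) (h : A * ρ = 0) :
    ρ * star A = 0 := by
  simpa [hρ.star_eq] using congrArg star h

variable [Module ℂ R] {ι : Type*} [Fintype ι]

def gksl (H : R) (L : ι → R) (ρ : R) : R :=
  -Complex.I • (H * ρ - ρ * H) + ∑ k, (L k * ρ * star (L k)
    - (1 / 2 : ℂ) • (star (L k) * L k * ρ + ρ * (star (L k) * L k)))

lemma gksl_eq_zero_of_mul_eq_zero {H ρ : R} {L : ι → R} (hρ : IsSelfAdjoint ρ)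
    (hH : IsSelfAdjoint H) (hHρ : H * ρ = 0) (hLρ : ∀ k, L k * ρ = 0) : gksl H L ρ = 0 := by
  rw [gksl]
  have hρH : ρ * H = 0 := by simpa [hH.star_eq] using mul_star_eq_zero_of_mul_eq_zero hρ hHρ
  rw [hHρ, hρH, sub_zero, smul_zero, zero_add]
  refine sum_eq_zero fun k _ => ?_
  have hρL : ρ * star (L k) = 0 := mul_star_eq_zero_of_mul_eq_zero hρ (hLρ k)
  rw [hLρ k, mul_assoc, hLρ k, ← mul_assoc, hρL]
  simp

end StarRing

lemma ContinuousLinearMap.mul_eq_zero_of_range_le_ker {R E : Type*} [Semiring R]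
    [AddCommMonoid E] [TopologicalSpace E] [Module R E] {X ρ : E →L[R] E}
    (h : LinearMap.range (ρ : E →ₗ[R] E) ≤ LinearMap.ker (X : E →ₗ[R] E)) : X * ρ = 0 := by
  ext1 x
  exact h ⟨x, rfl⟩

namespace AKV

variable {N M : ℕ}

lemma ketbra_apply (u v x : AKVSpace N M) : ketbra N M u v x = ⟪v, x⟫_ℂ • u := rfl

lemma adjoint_ketbra (u v : AKVSpace N M) : adjoint (ketbra N M u v) = ketbra N M v u := by
  refine ((eq_adjoint_iff _ _).2 fun x y => ?_).symm
  simp only [ketbra_apply, inner_smul_left, inner_smul_right, inner_conj_symm]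
  ring

lemma isSelfAdjoint_ketbra_self (u : AKVSpace N M) : IsSelfAdjoint (ketbra N M u u) := by
  rw [isSelfAdjoint_iff, star_eq_adjoint, adjoint_ketbra]

lemma range_ketbra_self_le {u : AKVSpace N M} {W : Submodule ℂ (AKVSpace N M)} (hu : u ∈ W) :
    LinearMap.range (ketbra N M u u : AKVSpace N M →ₗ[ℂ] AKVSpace N M) ≤ W := by
  rintro _ ⟨x, rfl⟩
  exact W.smul_mem _ hu

lemma isSelfAdjoint_Heff (γ1m γ1p γ2m γ2p γ3m : ℝ) (Z : AKVSpace N M →L[ℂ] AKVSpace N M) :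
    IsSelfAdjoint (Heff N M γ1m γ1p γ2m γ2p γ3m Z) := by
  have hreal : ∀ r : ℝ, IsSelfAdjoint (r : ℂ) := fun r => Complex.conj_ofReal r
  have hP3 : IsSelfAdjoint (P3 N M) := by
    rw [P3]
    refine isSelfAdjoint_sum (R := AKVSpace N M →L[ℂ] AKVSpace N M) (idx3 N M) ?_
    intro i _
    exact isSelfAdjoint_ketbra_self (ket N M i)
  have habsZ : IsSelfAdjoint (absZ N M Z) := by
    rw [absZ, ← star_eq_adjoint]
    exact IsSelfAdjoint.star_mul_self Z
  have hN : IsSelfAdjoint ((N : ℂ) - 1) := (IsSelfAdjoint.natCast N).sub (IsSelfAdjoint.one ℂ)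
  unfold Heff
  refine IsSelfAdjoint.sub (R := AKVSpace N M →L[ℂ] AKVSpace N M)
    (.sub (.add (.sub ?_ ?_) ?_) ?_) ?_
  · exact (hreal γ1p).smul (isSelfAdjoint_ketbra_self _)
  · exact (hN.mul (hreal γ1m)).smul (isSelfAdjoint_ketbra_self _)
  · exact (hN.mul (hreal γ2p)).smul hP3
  · exact (hN.mul (hreal γ2m)).smul habsZ
  · exact (hreal γ3m).smul (isSelfAdjoint_ketbra_self _)

lemma Lstar_eq_gksl (Γ1m Γ1p Γ2m Γ2p Γ3m γ1m γ1p γ2m γ2p γ3m : ℝ)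
    (Z ρ : AKVSpace N M →L[ℂ] AKVSpace N M) :
    Lstar N M Γ1m Γ1p Γ2m Γ2p Γ3m γ1m γ1p γ2m γ2p γ3m Z ρ =
      gksl (Heff N M γ1m γ1p γ2m γ2p γ3m Z) (kraus N M Γ1m Γ1p Γ2m Γ2p Γ3m Z) ρ :=
  rfl

variable {Z : AKVSpace N M →L[ℂ] AKVSpace N M} {x : AKVSpace N M}

lemma inner_eq_zero_of_mem_WD {v : AKVSpace N M} (hx : x ∈ WD N M Z)
    (hv : v ∈ ({ket N M 1, psi N M, psi' N M} : Set (AKVSpace N M))) : ⟪v, x⟫_ℂ = 0 :=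
  hx.1.1 v (Submodule.subset_span hv)

lemma ketbra_apply_of_mem_WD (u : AKVSpace N M) {v : AKVSpace N M} (hx : x ∈ WD N M Z)
    (hv : v ∈ ({ket N M 1, psi N M, psi' N M} : Set (AKVSpace N M))) : ketbra N M u v x = 0 := by
  rw [ketbra_apply, inner_eq_zero_of_mem_WD hx hv, zero_smul]

lemma WD_le_ker_Heff (hZ : Z * adjoint Z = P3 N M) (γ1m γ1p γ2m γ2p γ3m : ℝ) :
    WD N M Z ≤
      LinearMap.ker (Heff N M γ1m γ1p γ2m γ2p γ3m Z : AKVSpace N M →ₗ[ℂ] AKVSpace N M) := by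
  intro x hx
  have hZx : Z x = 0 := hx.1.2
  have hZstarx : adjoint Z x = 0 := hx.2
  simp [Heff, ketbra_apply_of_mem_WD _ hx, ← hZ, absZ, hZx, hZstarx]

lemma WD_le_ker_kraus (Γ1m Γ1p Γ2m Γ2p Γ3m : ℝ) (k : Fin 5) :
    WD N M Z ≤
      LinearMap.ker (kraus N M Γ1m Γ1p Γ2m Γ2p Γ3m Z k : AKVSpace N M →ₗ[ℂ] AKVSpace N M) := by
  intro x hx
  have hZx : Z x = 0 := hx.1.2
  have hZstarx : adjoint Z x = 0 := hx.2
  fin_cases k <;> simp [kraus, ketbra_apply_of_mem_WD _ hx, hZx, hZstarx]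

lemma Lstar_eq_zero_of_range_le_WD (hZ : Z * adjoint Z = P3 N M)
    (Γ1m Γ1p Γ2m Γ2p Γ3m γ1m γ1p γ2m γ2p γ3m : ℝ) {ρ : AKVSpace N M →L[ℂ] AKVSpace N M}
    (hρ : IsSelfAdjoint ρ)
    (hrange : LinearMap.range (ρ : AKVSpace N M →ₗ[ℂ] AKVSpace N M) ≤ WD N M Z) :
    Lstar N M Γ1m Γ1p Γ2m Γ2p Γ3m γ1m γ1p γ2m γ2p γ3m Z ρ = 0 := by
  rw [Lstar_eq_gksl]
  exact gksl_eq_zero_of_mul_eq_zero hρ (isSelfAdjoint_Heff γ1m γ1p γ2m γ2p γ3m Z)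
    (mul_eq_zero_of_range_le_ker (hrange.trans (WD_le_ker_Heff hZ γ1m γ1p γ2m γ2p γ3m)))
    fun k => mul_eq_zero_of_range_le_ker (hrange.trans (WD_le_ker_kraus Γ1m Γ1p Γ2m Γ2p Γ3m k))

theorem stationary_of_range_le_WD_general
    (N M : ℕ) (hM1 : 1 ≤ M)
    (Γ1m Γ1p Γ2m Γ2p Γ3m γ1m γ1p γ2m γ2p γ3m : ℝ)
    (Z : AKVSpace N M →L[ℂ] AKVSpace N M) (hZ : IsAKVZ N M hM1 Z) :
    (∀ w : AKVSpace N M, ‖w‖ = 1 → w ∈ WD N M Z →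
      Lstar N M Γ1m Γ1p Γ2m Γ2p Γ3m γ1m γ1p γ2m γ2p γ3m Z (ketbra N M w w) = 0) ∧
    (∀ ρ : AKVSpace N M →L[ℂ] AKVSpace N M, IsState N M ρ →
      LinearMap.range (ρ : AKVSpace N M →ₗ[ℂ] AKVSpace N M) ≤ WD N M Z →
      Lstar N M Γ1m Γ1p Γ2m Γ2p Γ3m γ1m γ1p γ2m γ2p γ3m Z ρ = 0) :=
  ⟨fun _ _ hw => Lstar_eq_zero_of_range_le_WD hZ.2.1 _ _ _ _ _ _ _ _ _ _
      (isSelfAdjoint_ketbra_self _) (range_ketbra_self_le hw),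
    fun _ hρ => Lstar_eq_zero_of_range_le_WD hZ.2.1 _ _ _ _ _ _ _ _ _ _ hρ.1.isSelfAdjoint⟩

/-- In the modified AKV model, every rank-one projection `|w⟩⟨w|` with `w` a unit vector in the
interaction-free subspace `W_D` is a stationary state, and more generally every state whose
range is contained in `W_D` is stationary. -/
theorem stationary_of_range_le_WD
    (N M : ℕ) (hN : 3 ≤ N) (hM1 : 1 ≤ M) (hM2 : M ≤ N - 1)
    (Γ1m Γ1p Γ2m Γ2p Γ3m γ1m γ1p γ2m γ2p γ3m : ℝ)
    (hΓ : 0 < Γ1m ∧ 0 < Γ1p ∧ 0 < Γ2m ∧ 0 < Γ2p ∧ 0 < Γ3m)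
    (hγ : 0 < γ1m ∧ 0 < γ1p ∧ 0 < γ2m ∧ 0 < γ2p ∧ 0 < γ3m)
    (Z : AKVSpace N M →L[ℂ] AKVSpace N M) (hZ : IsAKVZ N M hM1 Z) :
    (∀ w : AKVSpace N M, ‖w‖ = 1 → w ∈ WD N M Z →
      Lstar N M Γ1m Γ1p Γ2m Γ2p Γ3m γ1m γ1p γ2m γ2p γ3m Z (ketbra N M w w) = 0) ∧
    (∀ ρ : AKVSpace N M →L[ℂ] AKVSpace N M, IsState N M ρ →
      LinearMap.range (ρ : AKVSpace N M →ₗ[ℂ] AKVSpace N M) ≤ WD N M Z →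
      Lstar N M Γ1m Γ1p Γ2m Γ2p Γ3m γ1m γ1p γ2m γ2p γ3m Z ρ = 0) :=
  stationary_of_range_le_WD_general N M hM1 Γ1m Γ1p Γ2m Γ2p Γ3m γ1m γ1p γ2m γ2p γ3m Z hZ

end AKV
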